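/- Jensen-type bound for posterior variance ratios: for any x1, x2 and any points (θ_{j1}, θ_{j2}) with densities p_j^0(x1, x2) = φ((x1−θ_{j1})/σ1)φ((x2−θ_{j2})/σ2)/(σ1σ2), one has |Σ_j (θ_{j1} − x1) p_j^0(x1,x2) / Σ_j p_j^0(x1,x2)| ≤ {Σ_j (θ_{j1} − x1)^2 p_j^0 / Σ_j p_j^0}^{1/2} ≤ {2σ1^2 log[(2πσ1σ2)^{-1} n / Σ_j p_j^0(x1,x2)]}^{1/2}. -/
import Mathlib


open MeasureTheory Real

/-- Standard normal density. -/
noncomputable def gphi (x : ℝ) : ℝ := (Real.sqrt (2 * Real.pi))⁻¹ * Real.exp (-x ^ 2 / 2)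

/-- Joint density of two independent normals with means `(t1, t2)` and
standard deviations `(σ1, σ2)`. -/
noncomputable def pdens (σ1 σ2 t1 t2 x1 x2 : ℝ) : ℝ :=
  gphi ((x1 - t1) / σ1) * gphi ((x2 - t2) / σ2) / (σ1 * σ2)

lemma gphi_pos (x : ℝ) : 0 < gphi x := by
  unfold gphi
  positivity

lemma pdens_pos {σ1 σ2 : ℝ} (hσ1 : 0 < σ1) (hσ2 : 0 < σ2) (t1 t2 x1 x2 : ℝ) :
    0 < pdens σ1 σ2 t1 t2 x1 x2 := by
  unfold pdens
  have := gphi_pos ((x1 - t1) / σ1)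
  have := gphi_pos ((x2 - t2) / σ2)
  positivity

/-- Key identity bound: `exp(a²/(2σ1²)) * p ≤ (2πσ1σ2)⁻¹`. -/
lemma exp_mul_pdens_le {σ1 σ2 : ℝ} (hσ1 : 0 < σ1) (hσ2 : 0 < σ2) (t1 t2 x1 x2 : ℝ) :
    Real.exp ((t1 - x1) ^ 2 / (2 * σ1 ^ 2)) * pdens σ1 σ2 t1 t2 x1 x2 ≤
      (2 * Real.pi * σ1 * σ2)⁻¹ := by
  unfold pdens gphi
  have h2π : (0:ℝ) < 2 * Real.pi := by positivity
  have hs : Real.sqrt (2 * Real.pi) * Real.sqrt (2 * Real.pi) = 2 * Real.pi :=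
    Real.mul_self_sqrt h2π.le
  have key : Real.exp ((t1 - x1) ^ 2 / (2 * σ1 ^ 2)) *
      Real.exp (-((x1 - t1) / σ1) ^ 2 / 2) = 1 := by
    rw [← Real.exp_add]
    rw [show (t1 - x1) ^ 2 / (2 * σ1 ^ 2) + -((x1 - t1) / σ1) ^ 2 / 2 = 0 by
      field_simp; ring]
    exact Real.exp_zero
  have hexp2 : Real.exp (-((x2 - t2) / σ2) ^ 2 / 2) ≤ 1 := by
    apply Real.exp_le_one_iff.mpr
    have : (0:ℝ) ≤ ((x2 - t2) / σ2) ^ 2 := sq_nonneg _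
    linarith
  have hsp : (0:ℝ) < Real.sqrt (2 * Real.pi) := Real.sqrt_pos.mpr h2π
  calc Real.exp ((t1 - x1) ^ 2 / (2 * σ1 ^ 2)) *
        ((Real.sqrt (2 * Real.pi))⁻¹ * Real.exp (-((x1 - t1) / σ1) ^ 2 / 2) *
          ((Real.sqrt (2 * Real.pi))⁻¹ * Real.exp (-((x2 - t2) / σ2) ^ 2 / 2)) / (σ1 * σ2))
      = (Real.exp ((t1 - x1) ^ 2 / (2 * σ1 ^ 2)) * Real.exp (-((x1 - t1) / σ1) ^ 2 / 2)) *
          Real.exp (-((x2 - t2) / σ2) ^ 2 / 2) *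
          ((Real.sqrt (2 * Real.pi))⁻¹ * (Real.sqrt (2 * Real.pi))⁻¹ / (σ1 * σ2)) := by ring
    _ = Real.exp (-((x2 - t2) / σ2) ^ 2 / 2) * (2 * Real.pi * σ1 * σ2)⁻¹ := by
        rw [key, one_mul, ← mul_inv, hs]
        field_simp
    _ ≤ (2 * Real.pi * σ1 * σ2)⁻¹ := by
        nlinarith [inv_pos.mpr (show (0:ℝ) < 2 * Real.pi * σ1 * σ2 by positivity), hexp2]

/-- Jensen-type bound for posterior variance ratios:
`|Σ_j (θ_{j1} − x1) p_j⁰ / Σ_j p_j⁰| ≤ {Σ_j (θ_{j1} − x1)² p_j⁰ / Σ_j p_j⁰}^{1/2}`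
`≤ {2σ1² log[(2πσ1σ2)⁻¹ n / Σ_j p_j⁰(x1,x2)]}^{1/2}`. -/
theorem stmt3 (n : ℕ) (hn : 1 ≤ n) (σ1 σ2 x1 x2 : ℝ) (hσ1 : 0 < σ1) (hσ2 : 0 < σ2)
    (θ : Fin n → Fin 2 → ℝ) :
    |(∑ j : Fin n, (θ j 0 - x1) * pdens σ1 σ2 (θ j 0) (θ j 1) x1 x2) /
        (∑ j : Fin n, pdens σ1 σ2 (θ j 0) (θ j 1) x1 x2)| ≤
      Real.sqrt ((∑ j : Fin n, (θ j 0 - x1) ^ 2 * pdens σ1 σ2 (θ j 0) (θ j 1) x1 x2) /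
        (∑ j : Fin n, pdens σ1 σ2 (θ j 0) (θ j 1) x1 x2)) ∧
    Real.sqrt ((∑ j : Fin n, (θ j 0 - x1) ^ 2 * pdens σ1 σ2 (θ j 0) (θ j 1) x1 x2) /
        (∑ j : Fin n, pdens σ1 σ2 (θ j 0) (θ j 1) x1 x2)) ≤
      Real.sqrt (2 * σ1 ^ 2 *
        Real.log ((2 * Real.pi * σ1 * σ2)⁻¹ * (n : ℝ) /
          (∑ j : Fin n, pdens σ1 σ2 (θ j 0) (θ j 1) x1 x2))) := by
  set p : Fin n → ℝ := fun j => pdens σ1 σ2 (θ j 0) (θ j 1) x1 x2 with hp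
  set a : Fin n → ℝ := fun j => θ j 0 - x1 with ha
  have hppos : ∀ j, 0 < p j := fun j => pdens_pos hσ1 hσ2 _ _ _ _
  have hS : 0 < ∑ j, p j := Finset.sum_pos (fun j _ => hppos j) ⟨⟨0, hn⟩, Finset.mem_univ _⟩
  constructor
  · -- Cauchy-Schwarz part
    apply Real.abs_le_sqrt
    rw [div_pow, div_le_div_iff₀ (by positivity) hS]
    have hcs := Finset.sum_mul_sq_le_sq_mul_sq Finset.univ
      (fun j => Real.sqrt (p j)) (fun j => a j * Real.sqrt (p j))
    have h1 : ∀ j : Fin n, Real.sqrt (p j) * (a j * Real.sqrt (p j)) = a j * p j := by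
      intro j
      rw [show Real.sqrt (p j) * (a j * Real.sqrt (p j)) =
        a j * (Real.sqrt (p j) * Real.sqrt (p j)) by ring,
        Real.mul_self_sqrt (hppos j).le]
    have h2 : ∀ j : Fin n, (Real.sqrt (p j)) ^ 2 = p j := fun j => Real.sq_sqrt (hppos j).le
    have h3 : ∀ j : Fin n, (a j * Real.sqrt (p j)) ^ 2 = a j ^ 2 * p j := by
      intro j; rw [mul_pow, Real.sq_sqrt (hppos j).le]
    simp only [h1, h2, h3] at hcs
    nlinarith [hcs, hS]
  · -- Jensen part
    apply Real.sqrt_le_sqrt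
    have hσ1sq : (0:ℝ) < 2 * σ1 ^ 2 := by positivity
    set S := ∑ j, p j
    set A := (2 * Real.pi * σ1 * σ2)⁻¹ * (n : ℝ) / S with hA
    have hApos : 0 < A := by
      have : (0:ℝ) < (2 * Real.pi * σ1 * σ2)⁻¹ := by positivity
      have hn' : (0:ℝ) < (n : ℝ) := by exact_mod_cast hn
      positivity
    -- Jensen: exp of weighted average ≤ weighted average of exp
    have hjensen : Real.exp (∑ j, (p j / S) • (a j ^ 2 / (2 * σ1 ^ 2))) ≤
        ∑ j, (p j / S) * Real.exp (a j ^ 2 / (2 * σ1 ^ 2)) := by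
      refine convexOn_exp.map_sum_le (fun j _ => div_nonneg (hppos j).le hS.le)
        ?_ (fun j _ => Set.mem_univ _)
      rw [← Finset.sum_div, div_self hS.ne']
    have hbound : ∑ j, (p j / S) * Real.exp (a j ^ 2 / (2 * σ1 ^ 2)) ≤ A := by
      rw [hA, div_eq_mul_inv ((2 * Real.pi * σ1 * σ2)⁻¹ * (n : ℝ)) S]
      have : ∑ j, (p j / S) * Real.exp (a j ^ 2 / (2 * σ1 ^ 2)) =
          (∑ j, Real.exp (a j ^ 2 / (2 * σ1 ^ 2)) * p j) * S⁻¹ := by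
        rw [Finset.sum_mul]
        refine Finset.sum_congr rfl fun j _ => ?_
        field_simp
      rw [this]
      apply mul_le_mul_of_nonneg_right _ (inv_nonneg.mpr hS.le)
      calc ∑ j, Real.exp (a j ^ 2 / (2 * σ1 ^ 2)) * p j
          ≤ ∑ _j : Fin n, (2 * Real.pi * σ1 * σ2)⁻¹ :=
            Finset.sum_le_sum fun j _ => exp_mul_pdens_le hσ1 hσ2 _ _ _ _
        _ = (2 * Real.pi * σ1 * σ2)⁻¹ * (n : ℝ) := by
            rw [Finset.sum_const, Finset.card_univ, Fintype.card_fin, nsmul_eq_mul]; ring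
    have hfinal : Real.exp ((∑ j, a j ^ 2 * p j) / S / (2 * σ1 ^ 2)) ≤ A := by
      refine le_trans (le_of_eq ?_) (hjensen.trans hbound)
      congr 1
      rw [Finset.sum_div, Finset.sum_div]
      refine Finset.sum_congr rfl fun j _ => ?_
      simp only [smul_eq_mul]
      field_simp
    have hlog : (∑ j, a j ^ 2 * p j) / S / (2 * σ1 ^ 2) ≤ Real.log A :=
      (Real.le_log_iff_exp_le hApos).mpr hfinal
    calc (∑ j, a j ^ 2 * p j) / S
        = 2 * σ1 ^ 2 * ((∑ j, a j ^ 2 * p j) / S / (2 * σ1 ^ 2)) := by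
          field_simp
      _ ≤ 2 * σ1 ^ 2 * Real.log A := by
          exact mul_le_mul_of_nonneg_left hlog hσ1sq.le
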